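/- arXiv:2604.10753 — 2 statements merged into one kernel-verified Lean document; each statement's English description precedes it below -/
import Mathlib

section
/- Let A be a finite ℤ₊-nearring with ℤ₊-basis {b_j}_{j ∈ J}. Then A is discrete if and only if the relation ≤_LR on its basis—defined by b_i ≤_LR b_j if and only if there exist basis elements b_k and b_l such that b_i appears with positive coefficient in the product b_k · b_j · b_l—is symmetric. -/
/-!
With nonnegative structure constants, a basis element occurs in a product of nonnegative elements
exactly when it occurs in a product of basis elements from their supports. Consequently the
`≤_LR`-down-set of `b_i` spans a two-sided `ℤ₊`-ideal, and it contains `i` by the nearring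
condition. Since distinct basis vectors are independent, discreteness says that no `ℤ₊`-ideal `K`
meets the index set of `K^c`. If `i ≤_LR j` but not `j ≤_LR i`, then `i` lies in the down-set of
`i` and in its complement ideal. Conversely every `ℤ₊`-ideal is `≤_LR`-down-closed, so under
symmetry an index of `K^c`, lying `≤_LR`-below some `j ∉ K`, would force `j ∈ K`.
-/

/-- Given a possibly non-unital ring `A` that is free as a `ℤ`-module with basis `B`,
the relation `≤_LR` on basis indices: `i ≤_LR j` iff `b_i` appears with positive
coefficient in some product `b_k * b_j * b_l`. -/
def leLR {J : Type*} {A : Type*} [NonUnitalRing A] (B : Module.Basis J ℤ A) (i j : J) : Prop :=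
  ∃ k l : J, 0 < B.repr (B k * B j * B l) i

/-- The `ℤ`-span of the basis elements indexed by `K` is a two-sided ideal of `A`.
Such ideals are exactly the two-sided `ℤ₊`-ideals of the `ℤ₊`-pseudoring `(A, B)`. -/
def SpansTwoSidedIdeal {J : Type*} {A : Type*} [NonUnitalRing A] (B : Module.Basis J ℤ A)
    (K : Set J) : Prop :=
  ∀ a : A, ∀ x ∈ Submodule.span ℤ (⇑B '' K),
    a * x ∈ Submodule.span ℤ (⇑B '' K) ∧ x * a ∈ Submodule.span ℤ (⇑B '' K)

/-- The index set of the two-sided `ℤ₊`-ideal `I^c` associated to the two-sided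
`ℤ₊`-ideal with basis indexed by `K`: an index `l` belongs to it iff `b_l` appears
with positive coefficient in some product `b_i * b_j * b_k` with `j ∉ K`. -/
def complIdealIdx {J : Type*} {A : Type*} [NonUnitalRing A] (B : Module.Basis J ℤ A)
    (K : Set J) : Set J :=
  {l : J | ∃ i j k : J, j ∉ K ∧ 0 < B.repr (B i * B j * B k) l}

/-- The `ℤ₊`-pseudoring `(A, B)` is discrete: `I ∩ I^c = 0` for every two-sided
`ℤ₊`-ideal `I`. -/
def IsDiscreteZPseudoring {J : Type*} {A : Type*} [NonUnitalRing A]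
    (B : Module.Basis J ℤ A) : Prop :=
  ∀ K : Set J, SpansTwoSidedIdeal B K →
    Submodule.span ℤ (⇑B '' K) ⊓ Submodule.span ℤ (⇑B '' complIdealIdx B K) = ⊥

namespace Module.Basis

variable {J A : Type*} [NonUnitalRing A] (B : Basis J ℤ A)

theorem repr_mul_apply_eq_sum_left (x y : A) (t : J) :
    B.repr (x * y) t = ∑ u ∈ (B.repr x).support, B.repr x u * B.repr (B u * y) t := by
  conv_lhs => rw [← B.linearCombination_repr x, Finsupp.linearCombination_apply,
    Finsupp.sum, Finset.sum_mul]
  simp [smul_mul_assoc]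

theorem repr_mul_apply_eq_sum_right (x y : A) (t : J) :
    B.repr (x * y) t = ∑ v ∈ (B.repr y).support, B.repr y v * B.repr (x * B v) t := by
  conv_lhs => rw [← B.linearCombination_repr y, Finsupp.linearCombination_apply,
    Finsupp.sum, Finset.mul_sum]
  simp [mul_smul_comm]

theorem repr_self_apply_nonneg (u v : J) : 0 ≤ B.repr (B u) v := by
  classical
  rw [repr_self, Finsupp.single_apply]; split_ifs <;> simp

variable (hpos : ∀ i j k : J, 0 ≤ B.repr (B i * B j) k)
include hpos

theorem repr_mul_nonneg {x y : A} (hx : ∀ u, 0 ≤ B.repr x u) (hy : ∀ v, 0 ≤ B.repr y v)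
    (t : J) : 0 ≤ B.repr (x * y) t := by
  rw [repr_mul_apply_eq_sum_left]
  refine Finset.sum_nonneg fun u _ => mul_nonneg (hx u) ?_
  rw [repr_mul_apply_eq_sum_right]
  exact Finset.sum_nonneg fun v _ => mul_nonneg (hy v) (hpos u v t)

theorem pos_repr_mul_iff_left {x y : A} (hx : ∀ u, 0 ≤ B.repr x u) (hy : ∀ v, 0 ≤ B.repr y v)
    (t : J) : 0 < B.repr (x * y) t ↔ ∃ u, 0 < B.repr x u ∧ 0 < B.repr (B u * y) t := by
  have hterm (u : J) : 0 ≤ B.repr (B u * y) t :=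
    B.repr_mul_nonneg hpos (B.repr_self_apply_nonneg u) hy t
  rw [repr_mul_apply_eq_sum_left,
    Finset.sum_pos_iff_of_nonneg fun u _ => mul_nonneg (hx u) (hterm u)]
  refine ⟨fun ⟨u, _, hu⟩ =>
      ⟨u, pos_of_mul_pos_left hu (hterm u), pos_of_mul_pos_right hu (hx u)⟩,
    fun ⟨u, hxu, hu⟩ => ⟨u, Finsupp.mem_support_iff.mpr hxu.ne', mul_pos hxu hu⟩⟩

theorem pos_repr_mul_iff_right {x y : A} (hx : ∀ u, 0 ≤ B.repr x u) (hy : ∀ v, 0 ≤ B.repr y v)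
    (t : J) : 0 < B.repr (x * y) t ↔ ∃ v, 0 < B.repr y v ∧ 0 < B.repr (x * B v) t := by
  have hterm (v : J) : 0 ≤ B.repr (x * B v) t :=
    B.repr_mul_nonneg hpos hx (B.repr_self_apply_nonneg v) t
  rw [repr_mul_apply_eq_sum_right,
    Finset.sum_pos_iff_of_nonneg fun v _ => mul_nonneg (hy v) (hterm v)]
  refine ⟨fun ⟨v, _, hv⟩ =>
      ⟨v, pos_of_mul_pos_left hv (hterm v), pos_of_mul_pos_right hv (hy v)⟩,
    fun ⟨v, hyv, hv⟩ => ⟨v, Finsupp.mem_support_iff.mpr hyv.ne', mul_pos hyv hv⟩⟩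

end Module.Basis

theorem LinearIndependent.disjoint_span_image_iff {ι R M : Type*} [Ring R] [Nontrivial R]
    [AddCommGroup M] [Module R M] {v : ι → M} (hv : LinearIndependent R v) {s t : Set ι} :
    Disjoint (Submodule.span R (v '' s)) (Submodule.span R (v '' t)) ↔ Disjoint s t := by
  refine ⟨fun h => Set.disjoint_left.2 fun i his hit => hv.ne_zero i ?_, hv.disjoint_span_image⟩
  exact Submodule.disjoint_def.1 h (v i) (Submodule.subset_span ⟨i, his, rfl⟩)
    (Submodule.subset_span ⟨i, hit, rfl⟩)

section

open Module Submodule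

variable {J A : Type*} [NonUnitalRing A] {B : Basis J ℤ A}

theorem isDiscreteZPseudoring_iff_disjoint :
    IsDiscreteZPseudoring B ↔ ∀ K, SpansTwoSidedIdeal B K → Disjoint K (complIdealIdx B K) := by
  simp only [IsDiscreteZPseudoring, ← disjoint_iff, B.linearIndependent.disjoint_span_image_iff]

theorem SpansTwoSidedIdeal.of_basis_mul_mem {K : Set J}
    (h : ∀ m, ∀ l ∈ K, B m * B l ∈ span ℤ (B '' K) ∧ B l * B m ∈ span ℤ (B '' K)) :
    SpansTwoSidedIdeal B K := by
  intro a x hx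
  have ha : a ∈ span ℤ (Set.range B) := B.span_eq ▸ mem_top
  constructor
  · refine span_le.2 ?_ (map₂_span_span ℤ (LinearMap.mul ℤ A) _ _ ▸ apply_mem_map₂ _ ha hx)
    rintro _ ⟨_, ⟨m, rfl⟩, _, ⟨l, hl, rfl⟩, rfl⟩
    exact (h m l hl).1
  · refine span_le.2 ?_ (map₂_span_span ℤ (LinearMap.mul ℤ A) _ _ ▸ apply_mem_map₂ _ hx ha)
    rintro _ ⟨_, ⟨l, hl, rfl⟩, _, ⟨m, rfl⟩, rfl⟩
    exact (h m l hl).2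

theorem SpansTwoSidedIdeal.mem_of_leLR {K : Set J} (hK : SpansTwoSidedIdeal B K) {i j : J}
    (hj : j ∈ K) (h : leLR B i j) : i ∈ K := by
  obtain ⟨k, l, h⟩ := h
  have hmem : B k * B j * B l ∈ span ℤ (B '' K) :=
    (hK _ _ (hK _ _ (subset_span ⟨j, hj, rfl⟩)).1).2
  exact B.mem_span_image.1 hmem (Finsupp.mem_support_iff.2 h.ne')

variable (hpos : ∀ i j k : J, 0 ≤ B.repr (B i * B j) k)
include hpos

theorem leLR_of_pos_repr_mul_mul {x y : A} (hx : ∀ u, 0 ≤ B.repr x u)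
    (hy : ∀ v, 0 ≤ B.repr y v) {i t : J} (h : 0 < B.repr (x * B i * y) t) : leLR B t i := by
  have hxi := B.repr_mul_nonneg hpos hx (B.repr_self_apply_nonneg i)
  obtain ⟨v, -, hv⟩ := (B.pos_repr_mul_iff_right hpos hxi hy t).1 h
  rw [mul_assoc] at hv
  obtain ⟨u, -, hu⟩ := (B.pos_repr_mul_iff_left hpos hx (hpos i v) t).1 hv
  exact ⟨u, v, by rwa [mul_assoc]⟩

theorem leLR_of_pos_repr_basis_mul {i l m t : J} (h : 0 < B.repr (B m * B l) t)
    (hl : leLR B l i) : leLR B t i := by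
  obtain ⟨p, q, hl⟩ := hl
  have hpiq := B.repr_mul_nonneg hpos (hpos p i) (B.repr_self_apply_nonneg q)
  refine leLR_of_pos_repr_mul_mul hpos (hpos m p) (B.repr_self_apply_nonneg q) ?_
  rw [mul_assoc, mul_assoc, ← mul_assoc (B p)]
  exact (B.pos_repr_mul_iff_right hpos (B.repr_self_apply_nonneg m) hpiq t).2 ⟨l, hl, h⟩

theorem leLR_of_pos_repr_mul_basis {i l m t : J} (h : 0 < B.repr (B l * B m) t)
    (hl : leLR B l i) : leLR B t i := by
  obtain ⟨p, q, hl⟩ := hl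
  have hpiq := B.repr_mul_nonneg hpos (hpos p i) (B.repr_self_apply_nonneg q)
  refine leLR_of_pos_repr_mul_mul hpos (B.repr_self_apply_nonneg p) (hpos q m) ?_
  rw [← mul_assoc]
  exact (B.pos_repr_mul_iff_left hpos hpiq (B.repr_self_apply_nonneg m) t).2 ⟨l, hl, h⟩

theorem spansTwoSidedIdeal_setOf_leLR (i : J) : SpansTwoSidedIdeal B {l | leLR B l i} := by
  refine SpansTwoSidedIdeal.of_basis_mul_mem fun m l hl => ⟨?_, ?_⟩ <;>
    refine B.mem_span_image.2 fun t ht => ?_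
  · exact leLR_of_pos_repr_basis_mul hpos
      ((hpos m l t).lt_of_ne' (Finsupp.mem_support_iff.1 ht)) hl
  · exact leLR_of_pos_repr_mul_basis hpos
      ((hpos l m t).lt_of_ne' (Finsupp.mem_support_iff.1 ht)) hl

end

theorem discrete_iff_leLR_symmetric_general {J : Type*} {A : Type*}
    [NonUnitalRing A] (B : Module.Basis J ℤ A)
    (hpos : ∀ i j k : J, 0 ≤ B.repr (B i * B j) k)
    (hnear : ∀ i : J, ∃ j k : J, 0 < B.repr (B j * B i * B k) i) :
    IsDiscreteZPseudoring B ↔ Symmetric (leLR B) := by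
  rw [isDiscreteZPseudoring_iff_disjoint]
  refine ⟨fun hdisc i j hij => ?_, fun hsymm K hK => ?_⟩
  · by_contra hji
    have hi : i ∈ complIdealIdx B {l | leLR B l i} :=
      let ⟨k, l, hkl⟩ := hij; ⟨k, j, l, hji, hkl⟩
    exact Set.disjoint_left.1 (hdisc _ (spansTwoSidedIdeal_setOf_leLR hpos i)) (hnear i) hi
  · refine Set.disjoint_left.2 fun t htK ⟨p, j, q, hjK, hp⟩ => hjK ?_
    exact hK.mem_of_leLR htK (hsymm ⟨p, q, hp⟩)

/-- A finite `ℤ₊`-nearring `A`, with `ℤ₊`-basis `{b_j}_{j ∈ J}`,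
is discrete if and only if the relation `≤_LR` on its basis is symmetric. -/
theorem discrete_iff_leLR_symmetric {J : Type*} [Fintype J] {A : Type*}
    [NonUnitalRing A] (B : Module.Basis J ℤ A)
    (hpos : ∀ i j k : J, 0 ≤ B.repr (B i * B j) k)
    (hnear : ∀ i : J, ∃ j k : J, 0 < B.repr (B j * B i * B k) i) :
    IsDiscreteZPseudoring B ↔ Symmetric (leLR B) :=
  discrete_iff_leLR_symmetric_general B hpos hnear
end

section
/- A finite ℤ₊-nearring A is discrete if and only if there is a partition of its basis index set J into nonempty subsets J_1, …, J_n such that, for each j, the ℤ-span A_j of {b_i}_{i ∈ J_j} is a two-sided ℤ₊-ideal of A, the ring A decomposes as the (internal) direct sum A = A_1 ⊕ ⋯ ⊕ A_n with A_i · A_j = 0 for i ≠ j, and each A_j, with its induced ℤ₊-basis, is an indecomposable discrete finite ℤ₊-nearring. -/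
/-! Call `l` reachable from `i` when `b_l` occurs in some `b_p b_i b_q`. Positivity of the
structure constants makes reachability transitive and the nearring axiom makes it reflexive, so
the reachable set of `i` spans the ideal generated by `b_i`. In a discrete `A` reachability is also
symmetric: if `l` is reachable from `i` but not conversely, `b_l` lies both in the ideal generated
by `b_l` and in its complement ideal. The blocks are the reachability classes: distinct classes
annihilate each other, so an ideal of a block is an ideal of `A`, and it contains the whole class
of each of its members.

Conversely, let `b_l ∈ I ∩ I^c` occur in `b_i b_j b_k` with `b_j ∉ I`. The block of `b_j` contains
`b_l` and meets `I` in an ideal of the block which is proper, hence zero; this contradicts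
`b_l ∈ I`. -/

open Submodule

theorem Int.mul_pos_iff_of_nonneg_left {a b : ℤ} (ha : 0 ≤ a) : 0 < a * b ↔ 0 < a ∧ 0 < b := by
  rw [mul_pos_iff]
  constructor
  · rintro (h | ⟨h, -⟩)
    exacts [h, absurd h ha.not_gt]
  · exact .inl

theorem Equivalence.exists_fin_partition {α : Type*} [Finite α] {r : α → α → Prop}
    (hr : Equivalence r) :
    ∃ (n : ℕ) (P : Fin n → Set α), (∀ m, (P m).Nonempty) ∧
      (Pairwise fun m m' => Disjoint (P m) (P m')) ∧ (⋃ m, P m) = Set.univ ∧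
      ∀ m, ∀ i ∈ P m, P m = {l | r i l} := by
  let s : Setoid α := ⟨r, hr⟩
  obtain ⟨n, ⟨e⟩⟩ := Finite.exists_equiv_fin (Quotient s)
  refine ⟨n, fun m => {j | e ⟦j⟧ = m}, fun m => ?_, fun m m' hm => ?_, ?_, fun m i hi => ?_⟩
  · obtain ⟨j, hj⟩ := (e.symm m).exists_rep
    exact ⟨j, by simp [hj]⟩
  · exact Set.disjoint_left.2 fun j hj hj' => hm (hj.symm.trans hj')
  · exact Set.eq_univ_of_forall fun j => Set.mem_iUnion.2 ⟨_, rfl⟩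
  · ext l
    change e ⟦i⟧ = m at hi
    subst hi
    change e ⟦l⟧ = e ⟦i⟧ ↔ r i l
    rw [e.apply_eq_iff_eq, Quotient.eq]
    exact ⟨s.symm, s.symm⟩

namespace ZPlusBasis

variable {J A : Type*} [NonUnitalRing A] (B : Module.Basis J ℤ A)

def IsNonneg (x : A) : Prop := ∀ l, 0 ≤ B.repr x l

def Reach (i l : J) : Prop := ∃ p q, 0 < B.repr (B p * B i * B q) l

theorem span_image_inter (S T : Set J) :
    span ℤ (B '' (S ∩ T)) = span ℤ (B '' S) ⊓ span ℤ (B '' T) := by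
  ext x
  simp only [mem_inf, B.mem_span_image, Set.subset_inter_iff]

theorem iSup_span_image_eq_top {ι : Type*} {Jb : ι → Set J} (h : (⋃ m, Jb m) = Set.univ) :
    ⨆ m, span ℤ (B '' Jb m) = ⊤ := by
  rw [← span_iUnion, ← Set.image_iUnion, h, Set.image_univ, B.span_eq]

variable {B}

theorem _root_.SpansTwoSidedIdeal.inter {S T : Set J} (hS : SpansTwoSidedIdeal B S)
    (hT : SpansTwoSidedIdeal B T) : SpansTwoSidedIdeal B (S ∩ T) := by
  simp only [SpansTwoSidedIdeal, span_image_inter, mem_inf] at hS hT ⊢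
  intro a x ⟨hxS, hxT⟩
  exact ⟨⟨(hS a x hxS).1, (hT a x hxT).1⟩, (hS a x hxS).2, (hT a x hxT).2⟩

theorem mem_of_mem_span_of_repr_ne_zero {K : Set J} {x : A} (hx : x ∈ span ℤ (B '' K)) {l : J}
    (hl : B.repr x l ≠ 0) : l ∈ K :=
  B.mem_span_image.1 hx (Finsupp.mem_support_iff.2 hl)

theorem mul_eq_zero_of_mem_span {S T : Set J} (hST : ∀ p ∈ S, ∀ q ∈ T, B p * B q = 0) {x y : A}
    (hx : x ∈ span ℤ (B '' S)) (hy : y ∈ span ℤ (B '' T)) : x * y = 0 := by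
  have hxy := apply_mem_map₂ (LinearMap.mul ℤ A) hx hy
  rw [map₂_span_span, (span_eq_bot).2] at hxy
  · exact (mem_bot ℤ).1 hxy
  · rintro _ ⟨_, ⟨p, hp, rfl⟩, _, ⟨q, hq, rfl⟩, rfl⟩
    exact hST p hp q hq

theorem isNonneg_basis (i : J) : IsNonneg B (B i) := fun l => by
  classical
  rw [B.repr_self, Finsupp.single_apply]
  split_ifs <;> norm_num

theorem reach_refl (hnear : ∀ i : J, ∃ j k : J, 0 < B.repr (B j * B i * B k) i) (i : J) :
    Reach B i i :=
  hnear i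

theorem Reach.mem_of_spansTwoSidedIdeal {K : Set J} (hK : SpansTwoSidedIdeal B K) {i l : J}
    (hi : i ∈ K) (h : Reach B i l) : l ∈ K := by
  obtain ⟨p, q, hl⟩ := h
  have hpi := (hK (B p) (B i) (subset_span ⟨i, hi, rfl⟩)).1
  exact mem_of_mem_span_of_repr_ne_zero (hK (B q) _ hpi).2 hl.ne'

theorem isDiscreteZPseudoring_of_iUnion {ι : Type*} {Jb : ι → Set J}
    (hcover : (⋃ m, Jb m) = Set.univ) (hideal : ∀ m, SpansTwoSidedIdeal B (Jb m))
    (hindec : ∀ m, ∀ K : Set J, K ⊆ Jb m →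
      (∀ a ∈ span ℤ (B '' Jb m), ∀ x ∈ span ℤ (B '' K),
        a * x ∈ span ℤ (B '' K) ∧ x * a ∈ span ℤ (B '' K)) →
      K = ∅ ∨ K = Jb m) :
    IsDiscreteZPseudoring B := by
  intro K hK
  suffices K ∩ complIdealIdx B K = ∅ by simp [← span_image_inter, this]
  refine Set.eq_empty_of_forall_notMem fun l ⟨hlK, i, j, k, hjK, hl⟩ => ?_
  obtain ⟨m, hjm⟩ := Set.mem_iUnion.1 (hcover ▸ Set.mem_univ j)
  have hlm : l ∈ Jb m := mem_of_mem_span_of_repr_ne_zero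
    (hideal m (B k) _ (hideal m (B i) (B j) (subset_span ⟨j, hjm, rfl⟩)).1).2 hl.ne'
  have hKm := SpansTwoSidedIdeal.inter hK (hideal m)
  rcases hindec m (K ∩ Jb m) Set.inter_subset_right (fun a _ x hx => hKm a x hx) with h | h
  · exact h.subset ⟨hlK, hlm⟩
  · exact hjK (h.symm ▸ hjm : j ∈ K ∩ Jb m).1

section Finite

variable [Fintype J]

variable (B) in
theorem repr_mul_apply_eq_sum_left (x y : A) (m : J) :
    B.repr (x * y) m = ∑ p, B.repr x p * B.repr (B p * y) m := by
  conv_lhs => rw [← B.sum_repr x]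
  simp only [Finset.sum_mul, smul_mul_assoc, map_sum, map_zsmul, Finsupp.finsetSum_apply,
    Finsupp.smul_apply, smul_eq_mul]

variable (B) in
theorem repr_mul_apply_eq_sum_right (x y : A) (m : J) :
    B.repr (x * y) m = ∑ q, B.repr y q * B.repr (x * B q) m := by
  conv_lhs => rw [← B.sum_repr y]
  simp only [Finset.mul_sum, mul_smul_comm, map_sum, map_zsmul, Finsupp.finsetSum_apply,
    Finsupp.smul_apply, smul_eq_mul]

theorem exists_repr_ne_zero_of_repr_mul_ne_zero {x y : A} {m : J}
    (h : B.repr (x * y) m ≠ 0) :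
    ∃ p q, B.repr x p ≠ 0 ∧ B.repr y q ≠ 0 ∧ B.repr (B p * B q) m ≠ 0 := by
  rw [repr_mul_apply_eq_sum_left] at h
  obtain ⟨p, -, hp⟩ := Finset.exists_ne_zero_of_sum_ne_zero h
  rw [repr_mul_apply_eq_sum_right] at hp
  obtain ⟨q, -, hq⟩ := Finset.exists_ne_zero_of_sum_ne_zero (mul_ne_zero_iff.1 hp).2
  exact ⟨p, q, (mul_ne_zero_iff.1 hp).1, (mul_ne_zero_iff.1 hq).1, (mul_ne_zero_iff.1 hq).2⟩

theorem spansTwoSidedIdeal_of_basis_mul {K : Set J}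
    (hK : ∀ p, ∀ q ∈ K, ∀ m, (B.repr (B p * B q) m ≠ 0 ∨ B.repr (B q * B p) m ≠ 0) → m ∈ K) :
    SpansTwoSidedIdeal B K := by
  intro a x hx
  refine ⟨B.mem_span_image.2 fun m hm => ?_, B.mem_span_image.2 fun m hm => ?_⟩
  · obtain ⟨p, q, -, hq, hpq⟩ :=
      exists_repr_ne_zero_of_repr_mul_ne_zero (Finsupp.mem_support_iff.1 hm)
    exact hK p q (mem_of_mem_span_of_repr_ne_zero hx hq) m (.inl hpq)
  · obtain ⟨q, p, hq, -, hqp⟩ :=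
      exists_repr_ne_zero_of_repr_mul_ne_zero (Finsupp.mem_support_iff.1 hm)
    exact hK p q (mem_of_mem_span_of_repr_ne_zero hx hq) m (.inr hqp)

variable (hpos : ∀ i j k : J, 0 ≤ B.repr (B i * B j) k)
include hpos

theorem IsNonneg.mul {x y : A} (hx : IsNonneg B x) (hy : IsNonneg B y) : IsNonneg B (x * y) :=
  fun m => by
  rw [repr_mul_apply_eq_sum_left]
  refine Finset.sum_nonneg fun p _ => mul_nonneg (hx p) ?_
  rw [repr_mul_apply_eq_sum_right]
  exact Finset.sum_nonneg fun q _ => mul_nonneg (hy q) (hpos p q m)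

theorem repr_mul_pos_iff_left {x y : A} (hx : IsNonneg B x) (hy : IsNonneg B y) (m : J) :
    0 < B.repr (x * y) m ↔ ∃ p, 0 < B.repr x p ∧ 0 < B.repr (B p * y) m := by
  have hterm p := (isNonneg_basis p).mul hpos hy m
  rw [repr_mul_apply_eq_sum_left,
    Finset.sum_pos_iff_of_nonneg fun p _ => mul_nonneg (hx p) (hterm p)]
  simp only [Finset.mem_univ, true_and, Int.mul_pos_iff_of_nonneg_left (hx _)]

theorem repr_mul_pos_iff_right {x y : A} (hx : IsNonneg B x) (hy : IsNonneg B y) (m : J) :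
    0 < B.repr (x * y) m ↔ ∃ q, 0 < B.repr y q ∧ 0 < B.repr (x * B q) m := by
  have hterm q := hx.mul hpos (isNonneg_basis q) m
  rw [repr_mul_apply_eq_sum_right,
    Finset.sum_pos_iff_of_nonneg fun q _ => mul_nonneg (hy q) (hterm q)]
  simp only [Finset.mem_univ, true_and, Int.mul_pos_iff_of_nonneg_left (hy _)]

theorem Reach.mul_left {i l : J} (h : Reach B i l) {p m : J}
    (hm : 0 < B.repr (B p * B l) m) : Reach B i m := by
  obtain ⟨p', q, hl⟩ := h
  have hnn := isNonneg_basis (B := B)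
  have hprod : 0 < B.repr (B p * (B p' * B i * B q)) m :=
    (repr_mul_pos_iff_right hpos (hnn p) (((hnn p').mul hpos (hnn i)).mul hpos (hnn q)) m).2
      ⟨l, hl, hm⟩
  rw [show B p * (B p' * B i * B q) = B p * B p' * (B i * B q) by simp only [mul_assoc]] at hprod
  obtain ⟨p'', -, hp''⟩ := (repr_mul_pos_iff_left hpos ((hnn p).mul hpos (hnn p'))
    ((hnn i).mul hpos (hnn q)) m).1 hprod
  exact ⟨p'', q, by rwa [mul_assoc (B p'')]⟩

theorem Reach.mul_right {i l : J} (h : Reach B i l) {q m : J}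
    (hm : 0 < B.repr (B l * B q) m) : Reach B i m := by
  obtain ⟨p, q', hl⟩ := h
  have hnn := isNonneg_basis (B := B)
  have hprod : 0 < B.repr (B p * B i * B q' * B q) m :=
    (repr_mul_pos_iff_left hpos (((hnn p).mul hpos (hnn i)).mul hpos (hnn q')) (hnn q) m).2
      ⟨l, hl, hm⟩
  rw [mul_assoc] at hprod
  obtain ⟨q'', -, hq''⟩ := (repr_mul_pos_iff_right hpos ((hnn p).mul hpos (hnn i))
    ((hnn q').mul hpos (hnn q)) m).1 hprod
  exact ⟨p, q'', hq''⟩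

theorem Reach.trans {i l m : J} (hil : Reach B i l) (hlm : Reach B l m) : Reach B i m := by
  obtain ⟨p, q, hm⟩ := hlm
  have hnn := isNonneg_basis (B := B)
  obtain ⟨r, hr, hrm⟩ :=
    (repr_mul_pos_iff_left hpos ((hnn p).mul hpos (hnn l)) (hnn q) m).1 hm
  exact (hil.mul_left hpos hr).mul_right hpos hrm

theorem spansTwoSidedIdeal_reach (i : J) : SpansTwoSidedIdeal B {l | Reach B i l} := by
  refine spansTwoSidedIdeal_of_basis_mul fun p q hq m hm => ?_
  rcases hm with hm | hm
  · exact hq.mul_left hpos ((hpos p q m).lt_of_ne' hm)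
  · exact hq.mul_right hpos ((hpos q p m).lt_of_ne' hm)

variable (hnear : ∀ i : J, ∃ j k : J, 0 < B.repr (B j * B i * B k) i)
include hnear

theorem reach_of_repr_mul_mul_pos {p l q m : J} (h : 0 < B.repr (B p * B l * B q) m) :
    Reach B p m ∧ Reach B q m := by
  have hnn := isNonneg_basis (B := B)
  obtain ⟨r, hr, hrm⟩ := (repr_mul_pos_iff_left hpos ((hnn p).mul hpos (hnn l)) (hnn q) m).1 h
  rw [mul_assoc] at h
  obtain ⟨s, hs, hsm⟩ := (repr_mul_pos_iff_right hpos (hnn p) ((hnn l).mul hpos (hnn q)) m).1 h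
  exact ⟨((reach_refl hnear p).mul_right hpos hr).mul_right hpos hrm,
    ((reach_refl hnear q).mul_left hpos hs).mul_left hpos hsm⟩

variable (hdisc : IsDiscreteZPseudoring B)
include hdisc

theorem Reach.symm {i l : J} (h : Reach B i l) : Reach B l i := by
  by_contra hli
  obtain ⟨p, q, hl⟩ := h
  have hmem : B l ∈ span ℤ (B '' {m | Reach B l m}) ⊓
      span ℤ (B '' complIdealIdx B {m | Reach B l m}) :=
    mem_inf.2 ⟨subset_span ⟨l, reach_refl hnear l, rfl⟩, subset_span ⟨l, ⟨p, i, q, hli, hl⟩, rfl⟩⟩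
  rw [hdisc _ (spansTwoSidedIdeal_reach hpos l), mem_bot] at hmem
  exact B.ne_zero l hmem

theorem reach_equivalence : Equivalence (Reach B) :=
  ⟨reach_refl hnear, Reach.symm hpos hnear hdisc, Reach.trans hpos⟩

theorem basis_mul_eq_zero_of_not_reach {i j : J} (h : ¬ Reach B i j) : B i * B j = 0 := by
  by_contra hij
  obtain ⟨k, hk⟩ := DFunLike.ne_iff.1 ((LinearEquiv.map_ne_zero_iff B.repr).2 hij)
  have hik := (reach_refl hnear i).mul_right hpos ((hpos i j k).lt_of_ne' hk)
  have hjk := (reach_refl hnear j).mul_left hpos ((hpos i j k).lt_of_ne' hk)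
  exact h (hik.trans hpos (hjk.symm hpos hnear hdisc))

theorem spansTwoSidedIdeal_of_subset_reach {i : J} {K : Set J} (hKi : K ⊆ {l | Reach B i l})
    (hK : ∀ a ∈ span ℤ (B '' {l | Reach B i l}), ∀ x ∈ span ℤ (B '' K),
      a * x ∈ span ℤ (B '' K) ∧ x * a ∈ span ℤ (B '' K)) :
    SpansTwoSidedIdeal B K := by
  refine spansTwoSidedIdeal_of_basis_mul fun p q hq m hm => ?_
  by_cases hp : Reach B i p
  · have hpq := hK (B p) (subset_span ⟨p, hp, rfl⟩) (B q) (subset_span ⟨q, hq, rfl⟩)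
    rcases hm with hm | hm
    exacts [mem_of_mem_span_of_repr_ne_zero hpq.1 hm, mem_of_mem_span_of_repr_ne_zero hpq.2 hm]
  · -- `b_p` lies in another block, so it annihilates `b_q` on both sides
    have hqp : ¬ Reach B q p := fun h => hp ((hKi hq).trans hpos h)
    have hpq : ¬ Reach B p q := fun h => hqp (h.symm hpos hnear hdisc)
    simp [basis_mul_eq_zero_of_not_reach hpos hnear hdisc hpq,
      basis_mul_eq_zero_of_not_reach hpos hnear hdisc hqp] at hm

theorem eq_empty_or_eq_reach_of_subset_reach {i : J} {K : Set J}
    (hKi : K ⊆ {l | Reach B i l})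
    (hK : ∀ a ∈ span ℤ (B '' {l | Reach B i l}), ∀ x ∈ span ℤ (B '' K),
      a * x ∈ span ℤ (B '' K) ∧ x * a ∈ span ℤ (B '' K)) :
    K = ∅ ∨ K = {l | Reach B i l} := by
  refine K.eq_empty_or_nonempty.imp id fun ⟨j, hj⟩ => hKi.antisymm fun l hl => ?_
  exact (((hKi hj).symm hpos hnear hdisc).trans hpos hl).mem_of_spansTwoSidedIdeal
    (spansTwoSidedIdeal_of_subset_reach hpos hnear hdisc hKi hK) hj

end Finite

end ZPlusBasis

open ZPlusBasis

/-- A finite `ℤ₊`-nearring `A`, with `ℤ₊`-basis `{b_j}_{j ∈ J}`, is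
discrete if and only if there is a partition of `J` into nonempty subsets
`J_1, …, J_n` such that, for each `m`, the `ℤ`-span `A_m` of the basis elements
indexed by `J_m` is a two-sided `ℤ₊`-ideal of `A`, the ring `A` decomposes as the
internal direct sum `A = A_1 ⊕ ⋯ ⊕ A_n` with `A_m · A_{m'} = 0` for `m ≠ m'`, and
each `A_m` with its induced `ℤ₊`-basis is an indecomposable discrete finite
`ℤ₊`-nearring (i.e. it is again a `ℤ₊`-nearring and has no nontrivial two-sided
`ℤ₊`-ideal). -/
theorem discrete_iff_prod_indecomposable {J : Type*} [Fintype J] {A : Type*}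
    [NonUnitalRing A] (B : Module.Basis J ℤ A)
    (hpos : ∀ i j k : J, 0 ≤ B.repr (B i * B j) k)
    (hnear : ∀ i : J, ∃ j k : J, 0 < B.repr (B j * B i * B k) i) :
    IsDiscreteZPseudoring B ↔
      ∃ (n : ℕ) (Jb : Fin n → Set J),
        -- a partition of `J` into nonempty subsets
        (∀ m, (Jb m).Nonempty) ∧
        (Pairwise fun m m' => Disjoint (Jb m) (Jb m')) ∧
        (⋃ m, Jb m) = Set.univ ∧
        -- each `ℤ`-span `A_m` is a two-sided `ℤ₊`-ideal of `A`
        (∀ m, SpansTwoSidedIdeal B (Jb m)) ∧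
        -- `A` is the (internal) direct sum of the `A_m` …
        (⨆ m, Submodule.span ℤ (⇑B '' Jb m)) = ⊤ ∧
        -- … with `A_m · A_{m'} = 0` for `m ≠ m'`
        (∀ m m', m ≠ m' →
          ∀ x ∈ Submodule.span ℤ (⇑B '' Jb m), ∀ y ∈ Submodule.span ℤ (⇑B '' Jb m'),
            x * y = 0) ∧
        -- each `A_m`, with its induced `ℤ₊`-basis, is a `ℤ₊`-nearring …
        (∀ m, ∀ i ∈ Jb m, ∃ j ∈ Jb m, ∃ k ∈ Jb m, 0 < B.repr (B j * B i * B k) i) ∧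
        -- … which is indecomposable discrete: no nontrivial two-sided `ℤ₊`-ideal
        (∀ m, ∀ K : Set J, K ⊆ Jb m →
          (∀ a ∈ Submodule.span ℤ (⇑B '' Jb m), ∀ x ∈ Submodule.span ℤ (⇑B '' K),
            a * x ∈ Submodule.span ℤ (⇑B '' K) ∧ x * a ∈ Submodule.span ℤ (⇑B '' K)) →
          K = ∅ ∨ K = Jb m) := by
  refine ⟨fun hdisc => ?_, fun ⟨_, _, _, _, hcover, hideal, _, _, _, hindec⟩ =>
    isDiscreteZPseudoring_of_iUnion hcover hideal hindec⟩
  obtain ⟨n, Jb, hne, hdisj, hcover, hclass⟩ :=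
    (reach_equivalence hpos hnear hdisc).exists_fin_partition
  refine ⟨n, Jb, hne, hdisj, hcover, fun m => ?_, iSup_span_image_eq_top B hcover,
    fun m m' hmm' _ hx _ hy => mul_eq_zero_of_mem_span (fun p hp q hq => ?_) hx hy,
    fun m i hi => ?_, fun m => ?_⟩
  · obtain ⟨i, hi⟩ := hne m
    rw [hclass m i hi]
    exact spansTwoSidedIdeal_reach hpos i
  · refine basis_mul_eq_zero_of_not_reach hpos hnear hdisc fun hpq => ?_
    have hqm : q ∈ Jb m := by rw [hclass m p hp]; exact hpq
    exact Set.disjoint_left.1 (hdisj hmm') hqm hq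
  · obtain ⟨j, k, h⟩ := hnear i
    obtain ⟨hji, hki⟩ := reach_of_repr_mul_mul_pos hpos hnear h
    rw [hclass m i hi]
    exact ⟨j, hji.symm hpos hnear hdisc, k, hki.symm hpos hnear hdisc, h⟩
  · obtain ⟨i, hi⟩ := hne m
    rw [hclass m i hi]
    exact fun K => eq_empty_or_eq_reach_of_subset_reach hpos hnear hdisc
end
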